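/- arXiv:1906.08330 — 3 statements merged into one kernel-verified Lean document; each statement's English description precedes it below -/
import Mathlib

section
/- Let Σ_q be symmetric positive definite, Δ symmetric positive semidefinite, P > 0, and ρ ∈ R^n. Define Σ_P = Σ_q + PΔ and m(P) = ρᵀΣ_P^{-1}ρ. Then m(P) + P·m'(P) > 0 for all ρ ≠ 0, where m'(P) = −ρᵀΣ_P^{-1}ΔΣ_P^{-1}ρ. -/
open Matrix

theorem m_plus_P_m_deriv_pos {n : ℕ}
    (Sq Δ : Matrix (Fin n) (Fin n) ℝ)
    (hSq : Sq.PosDef) (hΔ : Δ.PosSemidef)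
    (P : ℝ) (hP : 0 < P)
    (ρ : Fin n → ℝ) (hρ : ρ ≠ 0)
    (SP : Matrix (Fin n) (Fin n) ℝ) (hSP : SP = Sq + P • Δ) :
    0 < ρ ⬝ᵥ (SP⁻¹ *ᵥ ρ) - P * (ρ ⬝ᵥ ((SP⁻¹ * Δ * SP⁻¹) *ᵥ ρ)) := by
  have hSPpd : SP.PosDef := by
    have hPΔ : (P • Δ).PosSemidef := by
      refine PosSemidef.of_dotProduct_mulVec_nonneg ?_ (fun x => ?_)
      · show (P • Δ)ᴴ = P • Δ
        rw [conjTranspose_smul, hΔ.1.eq]; simp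
      · rw [smul_mulVec, dotProduct_smul, smul_eq_mul]
        exact mul_nonneg hP.le (hΔ.dotProduct_mulVec_nonneg x)
    rw [hSP]; exact hSq.add_posSemidef hPΔ
  have hinv : IsUnit SP.det := hSPpd.det_pos.ne'.isUnit
  set x := SP⁻¹ *ᵥ ρ with hx
  have hρx : ρ = SP *ᵥ x := by
    rw [hx, mulVec_mulVec, Matrix.mul_nonsing_inv _ hinv, one_mulVec]
  have hxne : x ≠ 0 := by
    intro h
    apply hρ
    rw [hρx, h, mulVec_zero]
  have hsymmSP : SPᵀ = SP := hSPpd.isHermitian.eq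
  -- first term: ρ ⬝ᵥ x = x ⬝ᵥ SP *ᵥ x
  have h1 : ρ ⬝ᵥ (SP⁻¹ *ᵥ ρ) = x ⬝ᵥ (SP *ᵥ x) := by
    rw [← hx, hρx]; exact dotProduct_comm _ _
  have hsymminv : SP⁻¹ᵀ = SP⁻¹ := by
    rw [transpose_nonsing_inv, hsymmSP]
  have h2 : ρ ⬝ᵥ ((SP⁻¹ * Δ * SP⁻¹) *ᵥ ρ) = x ⬝ᵥ (Δ *ᵥ x) := by
    rw [← mulVec_mulVec, ← mulVec_mulVec, ← hx, dotProduct_mulVec, ← mulVec_transpose,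
      hsymminv, ← hx]
  rw [h1, h2]
  have hSq' : (0:ℝ) < x ⬝ᵥ (Sq *ᵥ x) := by
    have := hSq.dotProduct_mulVec_pos hxne
    simpa using this
  have hΔ' : (0:ℝ) ≤ x ⬝ᵥ (Δ *ᵥ x) := by
    have := hΔ.dotProduct_mulVec_nonneg x
    simpa using this
  have : x ⬝ᵥ (SP *ᵥ x) = x ⬝ᵥ (Sq *ᵥ x) + P * (x ⬝ᵥ (Δ *ᵥ x)) := by
    rw [hSP, add_mulVec, dotProduct_add, smul_mulVec, dotProduct_smul, smul_eq_mul]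
  rw [this]
  linarith
end

section
/- Fix positive constants b, s, and let Σ_q ≻ 0, Δ ⪰ 0 symmetric, ρ ∈ R^n nonzero. Define m(P)=ρᵀ(Σ_q+PΔ)^{-1}ρ and F(P) = (1/b)(1 − s/(s + P·m(P))) for P > 0. Then F is strictly increasing and concave in P (F'(P) > 0 and F''(P) ≤ 0). -/
open Matrix


lemma term_mono' {d q x y : ℝ} (hd : 0 ≤ d) (hq : 0 ≤ q) (hx : 0 < x) (hxy : x ≤ y) :
    x * q * (1 + x * d)⁻¹ ≤ y * q * (1 + y * d)⁻¹ := by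
  have h1 : 0 < 1 + x * d := by nlinarith
  have h2 : 0 < 1 + y * d := by nlinarith
  rw [← div_eq_mul_inv, ← div_eq_mul_inv, div_le_div_iff₀ h1 h2]
  nlinarith

lemma term_strict {d q x y : ℝ} (hd : 0 ≤ d) (hq : 0 < q) (hx : 0 < x) (hxy : x < y) :
    x * q * (1 + x * d)⁻¹ < y * q * (1 + y * d)⁻¹ := by
  have h1 : 0 < 1 + x * d := by nlinarith
  have h2 : 0 < 1 + y * d := by nlinarith
  rw [← div_eq_mul_inv, ← div_eq_mul_inv, div_lt_div_iff₀ h1 h2]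
  nlinarith

lemma term_concave {d q x y a c : ℝ} (hd : 0 ≤ d) (hq : 0 ≤ q) (hx : 0 < x) (hy : 0 < y)
    (ha : 0 ≤ a) (hc : 0 ≤ c) (hac : a + c = 1) :
    a * (x * q * (1 + x * d)⁻¹) + c * (y * q * (1 + y * d)⁻¹)
      ≤ (a * x + c * y) * q * (1 + (a * x + c * y) * d)⁻¹ := by
  have h1 : 0 < 1 + x * d := by nlinarith
  have h2 : 0 < 1 + y * d := by nlinarith
  have h0 : 0 < 1 + (a * x + c * y) * d := by
    nlinarith [mul_nonneg (add_nonneg (mul_nonneg ha hx.le) (mul_nonneg hc hy.le)) hd]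
  rw [← div_eq_mul_inv, ← div_eq_mul_inv, ← div_eq_mul_inv, mul_div_assoc', mul_div_assoc',
    div_add_div _ _ (ne_of_gt h1) (ne_of_gt h2), div_le_div_iff₀ (by positivity) h0]
  have hc' : c = 1 - a := by linarith
  subst hc'
  nlinarith [mul_nonneg (mul_nonneg (mul_nonneg (mul_nonneg hd hq) ha) hc) (sq_nonneg (x - y))]

-- phi(t) = s/(s+t) is convex on t ≥ 0:
lemma phi_convex {s u v a c : ℝ} (hs : 0 < s) (hu : 0 ≤ u) (hv : 0 ≤ v)
    (ha : 0 ≤ a) (hc : 0 ≤ c) (hac : a + c = 1) :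
    s / (s + (a * u + c * v)) ≤ a * (s / (s + u)) + c * (s / (s + v)) := by
  have h1 : 0 < s + u := by linarith
  have h2 : 0 < s + v := by linarith
  have h0 : 0 < s + (a * u + c * v) := by nlinarith [mul_nonneg ha hu, mul_nonneg hc hv]
  rw [← mul_div_assoc, ← mul_div_assoc, div_add_div _ _ (ne_of_gt h1) (ne_of_gt h2),
    div_le_div_iff₀ h0 (by positivity)]
  have hc' : c = 1 - a := by linarith
  subst hc'
  nlinarith [mul_nonneg (mul_nonneg (mul_nonneg hs.le ha) hc) (sq_nonneg (u - v))]

lemma scalar_main {n : ℕ} (b s : ℝ) (hb : 0 < b) (hs : 0 < s)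
    (c d : Fin n → ℝ) (hd : ∀ i, 0 ≤ d i) (hc : c ≠ 0)
    (m F : ℝ → ℝ)
    (hm : ∀ P, 0 < P → m P = ∑ i, c i ^ 2 * (1 + P * d i)⁻¹)
    (hF : ∀ P, F P = (1 / b) * (1 - s / (s + P * m P))) :
    StrictMonoOn F (Set.Ioi (0 : ℝ)) ∧ ConcaveOn ℝ (Set.Ioi (0 : ℝ)) F := by
  set g : ℝ → ℝ := fun P => ∑ i, P * c i ^ 2 * (1 + P * d i)⁻¹ with hg
  have hgm : ∀ P, 0 < P → P * m P = g P := by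
    intro P hP
    rw [hm P hP, Finset.mul_sum]
    exact Finset.sum_congr rfl fun i _ => by ring
  have hgnonneg : ∀ P, 0 < P → 0 ≤ g P := by
    intro P hP
    apply Finset.sum_nonneg
    intro i _
    have : 0 < 1 + P * d i := by nlinarith [hd i]
    positivity
  -- strict monotonicity of g
  obtain ⟨i0, hi0⟩ := Function.ne_iff.mp hc
  have hgmono : ∀ x y : ℝ, 0 < x → x < y → g x < g y := by
    intro x y hx hxy
    apply Finset.sum_lt_sum (fun i _ => term_mono' (hd i) (sq_nonneg (c i)) hx hxy.le)
    exact ⟨i0, Finset.mem_univ _, term_strict (hd i0) (lt_of_le_of_ne (sq_nonneg _) (Ne.symm (pow_ne_zero 2 hi0))) hx hxy⟩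
  -- concavity of g
  have hgconc : ∀ x y a e : ℝ, 0 < x → 0 < y → 0 ≤ a → 0 ≤ e → a + e = 1 →
      a * g x + e * g y ≤ g (a * x + e * y) := by
    intro x y a e hx hy ha he hae
    rw [hg]
    simp only
    rw [Finset.mul_sum, Finset.mul_sum, ← Finset.sum_add_distrib]
    exact Finset.sum_le_sum fun i _ => term_concave (hd i) (sq_nonneg (c i)) hx hy ha he hae
  have hsg : ∀ P, 0 < P → 0 < s + g P := fun P hP => by linarith [hgnonneg P hP]
  constructor
  · intro x hx y hy hxy
    simp only [Set.mem_Ioi] at hx hy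
    rw [hF, hF, hgm x hx, hgm y hy]
    have h1 := hsg x hx
    have h2 := hsg y hy
    have : s / (s + g y) < s / (s + g x) := by
      apply div_lt_div_of_pos_left hs h1
      linarith [hgmono x y hx hxy]
    have hbi : 0 < 1 / b := by positivity
    nlinarith
  · refine ⟨convex_Ioi 0, ?_⟩
    intro x hx y hy a e ha he hae
    simp only [Set.mem_Ioi] at hx hy
    simp only [smul_eq_mul]
    have hz : 0 < a * x + e * y := by
      rcases eq_or_lt_of_le ha with h | h
      · simp [← h] at hae ⊢; nlinarith
      · nlinarith [mul_nonneg he hy.le]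
    rw [hF, hF, hF, hgm x hx, hgm y hy, hgm _ hz]
    have h1 := hsg x hx
    have h2 := hsg y hy
    have h0 : 0 < s + (a * g x + e * g y) := by
      nlinarith [mul_nonneg ha (hgnonneg x hx), mul_nonneg he (hgnonneg y hy)]
    have step1 : s / (s + g (a * x + e * y)) ≤ s / (s + (a * g x + e * g y)) := by
      apply div_le_div_of_nonneg_left hs.le h0
      linarith [hgconc x y a e hx hy ha he hae]
    have step2 := phi_convex hs (hgnonneg x hx) (hgnonneg y hy) ha he hae
    have hbi : 0 ≤ 1 / b := by positivity
    have key : s / (s + g (a * x + e * y)) ≤ a * (s / (s + g x)) + e * (s / (s + g y)) :=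
      le_trans step1 step2
    nlinarith [key]

theorem F_strict_mono_concave {n : ℕ}
    (b s : ℝ) (hb : 0 < b) (hs : 0 < s)
    (Sq Δ : Matrix (Fin n) (Fin n) ℝ)
    (hSq : Sq.PosDef) (hΔ : Δ.PosSemidef)
    (ρ : Fin n → ℝ) (hρ : ρ ≠ 0)
    (m F : ℝ → ℝ)
    (hm : ∀ P, m P = ρ ⬝ᵥ ((Sq + P • Δ)⁻¹ *ᵥ ρ))
    (hF : ∀ P, F P = (1 / b) * (1 - s / (s + P * m P))) :
    StrictMonoOn F (Set.Ioi (0 : ℝ)) ∧ ConcaveOn ℝ (Set.Ioi (0 : ℝ)) F := by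
  have hrep : ∃ (c d : Fin n → ℝ), (∀ i, 0 ≤ d i) ∧ c ≠ 0 ∧
      ∀ P, 0 < P → m P = ∑ i, c i ^ 2 * (1 + P * d i)⁻¹ := by
    classical
    have hSqps := hSq.posSemidef
    open scoped MatrixOrder in set R := CFC.sqrt Sq with hRdef
    have hRR : R * R = Sq := open scoped MatrixOrder in CFC.sqrt_mul_sqrt_self Sq hSqps.nonneg
    have hRh : R.IsHermitian := open scoped MatrixOrder in (CFC.sqrt_nonneg Sq).posSemidef.1
    have hdetSq : Sq.det ≠ 0 := ne_of_gt hSq.det_pos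
    have hRdet : IsUnit R.det := by
      refine isUnit_iff_ne_zero.mpr fun h => hdetSq ?_
      rw [← hRR, det_mul, h, zero_mul]
    have hRinv : R * R⁻¹ = 1 := mul_nonsing_inv R hRdet
    have hRinv' : R⁻¹ * R = 1 := nonsing_inv_mul R hRdet
    have hRinvH : (R⁻¹)ᴴ = R⁻¹ := by rw [conjTranspose_nonsing_inv, hRh.eq]
    set M := R⁻¹ * Δ * R⁻¹ with hMdef
    have hMps : M.PosSemidef := by
      have := hΔ.mul_mul_conjTranspose_same (R⁻¹)
      rwa [hRinvH] at this
    have hMh : M.IsHermitian := hMps.1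
    set ev := hMh.eigenvalues with hevdef
    have hev0 : ∀ i, 0 ≤ ev i := hMps.eigenvalues_nonneg
    set U : Matrix (Fin n) (Fin n) ℝ := (hMh.eigenvectorUnitary : Matrix (Fin n) (Fin n) ℝ)
      with hUdef
    have hUU : U * star U = 1 := Unitary.coe_mul_star_self _
    have hUU' : star U * U = 1 := Unitary.coe_star_mul_self _
    have hspec : M = U * diagonal ev * star U := by
      have h := hMh.spectral_theorem
      rwa [Unitary.conjStarAlgAut_apply, RCLike.ofReal_real_eq_id, Function.id_comp] at h
    set T := R * U with hTdef
    have hTH : Tᴴ = star U * R := by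
      rw [hTdef, conjTranspose_mul, hRh.eq, star_eq_conjTranspose]
    have hUdet : IsUnit U.det := by
      refine isUnit_iff_ne_zero.mpr fun h => ?_
      have := congrArg det hUU
      rw [det_mul, h, zero_mul, det_one] at this
      exact zero_ne_one this
    have hTdet : IsUnit T.det := by
      rw [hTdef, det_mul]; exact hRdet.mul hUdet
    have hTinv : T * T⁻¹ = 1 := mul_nonsing_inv T hTdet
    set c := T⁻¹ *ᵥ ρ with hcdef
    have hc : c ≠ 0 := by
      intro h
      apply hρ
      have : T *ᵥ c = 0 := by rw [h, mulVec_zero]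
      rwa [hcdef, mulVec_mulVec, hTinv, one_mulVec] at this
    refine ⟨c, ev, hev0, hc, ?_⟩
    intro P hP
    set w : Fin n → ℝ := fun i => 1 + P * ev i with hwdef
    have hw0 : ∀ i, w i ≠ 0 := fun i => by
      have := hev0 i; simp only [hwdef]; nlinarith
    have hMRR : R * M * R = Δ := by
      rw [hMdef]
      simp only [← mul_assoc]
      rw [hRinv, one_mul, mul_assoc, hRinv', mul_one]
    have hdiag : diagonal w = 1 + P • diagonal ev := by
      rw [← diagonal_one, ← diagonal_smul, diagonal_add]
      rfl
    have hIPM : U * diagonal w * star U = 1 + P • M := by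
      rw [hdiag, mul_add, mul_one, add_mul, mul_smul_comm, smul_mul_assoc, hUU, hspec]
    have key1 : Sq + P • Δ = T * diagonal w * Tᴴ := by
      have e : T * diagonal w * Tᴴ = R * (U * diagonal w * star U) * R := by
        rw [hTH, hTdef]; simp only [mul_assoc]
      rw [e, hIPM, mul_add, mul_one, add_mul, mul_smul_comm, smul_mul_assoc, hRR, hMRR]
    have hdiaginv : (diagonal w)⁻¹ = diagonal (fun i => (w i)⁻¹) := by
      apply inv_eq_right_inv
      rw [diagonal_mul_diagonal]
      convert diagonal_one using 2
      funext i
      exact mul_inv_cancel₀ (hw0 i)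
    have key2 : (Sq + P • Δ)⁻¹ = (Tᴴ)⁻¹ * (diagonal (fun i => (w i)⁻¹) * T⁻¹) := by
      rw [key1, Matrix.mul_inv_rev, Matrix.mul_inv_rev, hdiaginv]
    have hTt : Tᴴ = Tᵀ := by ext i j; simp [conjTranspose_apply]
    have hTHinv : (Tᴴ)⁻¹ = (T⁻¹)ᵀ := by rw [hTt, ← transpose_nonsing_inv]
    rw [hm P, key2]
    rw [← mulVec_mulVec, ← mulVec_mulVec, hTHinv, ← hcdef, dotProduct_mulVec, vecMul_transpose,
      ← hcdef]
    simp only [dotProduct, mulVec_diagonal]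
    exact Finset.sum_congr rfl fun i _ => by ring
  obtain ⟨c, d, hd, hc, hrep⟩ := hrep
  exact scalar_main b s hb hs c d hd hc m F hrep hF
end

section
/- Consider minimizing Σ_{l=1}^L 2σ_{h_l}²σ_{v_l}²/(σ_{v_l}² + ψ_l σ_{h_l}²) over ψ_l ≥ 0 subject to Σ_l ψ_l ≤ P with P ≥ (σ_{v_L}/σ_{h_L}²)Σ_l σ_{v_l} − Σ_l σ_{v_l}²/σ_{h_l}² (so all ψ_l may be positive, assuming σ_{v_l}/σ_{h_l}² sorted increasing). The unique minimizer is ψ_l* = (σ_{v_l}²/σ_{h_l}²)(σ_{h_l}²/(κσ_{v_l}) − 1) with κ = (Σ_l σ_{v_l})/(P + Σ_l σ_{v_l}²/σ_{h_l}²), and this satisfies Σ_l ψ_l* = P and ψ_l* ≥ 0. -/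
open Finset

private lemma key_tangent (a b κ ψ : ℝ) (ha : 0 < a) (hb : 0 < b) (hκ : 0 < κ)
    (hψ : 0 ≤ ψ) :
    2 * a * κ - 2 * κ ^ 2 * (ψ - (a / κ - a ^ 2 / b)) ≤ 2 * b * a ^ 2 / (a ^ 2 + ψ * b) ∧
    (ψ ≠ a / κ - a ^ 2 / b →
      2 * a * κ - 2 * κ ^ 2 * (ψ - (a / κ - a ^ 2 / b)) < 2 * b * a ^ 2 / (a ^ 2 + ψ * b)) := by
  have hs : 0 < a ^ 2 + ψ * b := by positivity
  have hdiff : 2 * b * a ^ 2 / (a ^ 2 + ψ * b)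
      - (2 * a * κ - 2 * κ ^ 2 * (ψ - (a / κ - a ^ 2 / b)))
      = 2 * (a * b - κ * (a ^ 2 + ψ * b)) ^ 2 / (b * (a ^ 2 + ψ * b)) := by
    field_simp
    ring
  constructor
  · nlinarith [div_nonneg (by positivity : (0:ℝ) ≤ 2 * (a * b - κ * (a ^ 2 + ψ * b)) ^ 2)
      (by positivity : (0:ℝ) ≤ b * (a ^ 2 + ψ * b))]
  · intro hne
    have hne' : a * b - κ * (a ^ 2 + ψ * b) ≠ 0 := by
      intro h0
      apply hne
      have : κ * (a ^ 2 + ψ * b) = a * b := by linarith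
      field_simp
      nlinarith
    have : 0 < 2 * (a * b - κ * (a ^ 2 + ψ * b)) ^ 2 / (b * (a ^ 2 + ψ * b)) := by
      apply div_pos (by positivity) (by positivity)
    linarith

theorem training_power_allocation {L : ℕ}
    (σh σv : Fin (L + 1) → ℝ)
    (hσh : ∀ l, 0 < σh l) (hσv : ∀ l, 0 < σv l)
    (hsorted : Monotone fun l => σv l / (σh l) ^ 2)
    (P : ℝ)
    (hP : (σv (Fin.last L) / (σh (Fin.last L)) ^ 2) * ∑ l, σv l
            - ∑ l, (σv l) ^ 2 / (σh l) ^ 2 ≤ P)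
    (κ : ℝ) (hκ : κ = (∑ l, σv l) / (P + ∑ l, (σv l) ^ 2 / (σh l) ^ 2))
    (ψstar : Fin (L + 1) → ℝ)
    (hψ : ∀ l, ψstar l = ((σv l) ^ 2 / (σh l) ^ 2) * ((σh l) ^ 2 / (κ * σv l) - 1)) :
    (∑ l, ψstar l) = P ∧
    (∀ l, 0 ≤ ψstar l) ∧
    ∀ ψ : Fin (L + 1) → ℝ, (∀ l, 0 ≤ ψ l) → (∑ l, ψ l) ≤ P → ψ ≠ ψstar →
      (∑ l, 2 * (σh l) ^ 2 * (σv l) ^ 2 / ((σv l) ^ 2 + ψstar l * (σh l) ^ 2)) <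
        ∑ l, 2 * (σh l) ^ 2 * (σv l) ^ 2 / ((σv l) ^ 2 + ψ l * (σh l) ^ 2) := by
  set S1 := ∑ l, σv l with hS1def
  set S2 := ∑ l, (σv l) ^ 2 / (σh l) ^ 2 with hS2def
  have hS1 : 0 < S1 := Finset.sum_pos (fun l _ => hσv l) ⟨Fin.last L, Finset.mem_univ _⟩
  have hlastpos : 0 < σv (Fin.last L) / (σh (Fin.last L)) ^ 2 := by
    have := hσh (Fin.last L); have := hσv (Fin.last L); positivity
  have hD : 0 < P + S2 := by nlinarith
  have hκpos : 0 < κ := by rw [hκ]; positivity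
  -- rewrite ψstar
  have hψ' : ∀ l, ψstar l = σv l / κ - (σv l) ^ 2 / (σh l) ^ 2 := by
    intro l
    rw [hψ l]
    have h1 := hσh l; have h2 := hσv l
    field_simp
  -- budget equality
  have hsum : (∑ l, ψstar l) = P := by
    have : (∑ l, ψstar l) = S1 / κ - S2 := by
      rw [Finset.sum_congr rfl (fun l _ => hψ' l), Finset.sum_sub_distrib,
        ← Finset.sum_div]
    rw [this, hκ]
    field_simp
    ring
  -- nonnegativity
  have hκa : ∀ l, κ * σv l ≤ (σh l) ^ 2 := by
    intro l
    have hm : σv l / (σh l) ^ 2 ≤ σv (Fin.last L) / (σh (Fin.last L)) ^ 2 :=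
      hsorted (Fin.le_last l)
    have hbl : 0 < (σh l) ^ 2 := by have := hσh l; positivity
    have hbL : 0 < (σh (Fin.last L)) ^ 2 := by have := hσh (Fin.last L); positivity
    have hm' : σv l * (σh (Fin.last L)) ^ 2 ≤ σv (Fin.last L) * (σh l) ^ 2 := by
      rw [div_le_div_iff₀ hbl hbL] at hm; linarith
    have hDge : σv (Fin.last L) / (σh (Fin.last L)) ^ 2 * S1 ≤ P + S2 := by linarith
    have hκle : κ ≤ (σh (Fin.last L)) ^ 2 / σv (Fin.last L) := by
      rw [hκ, div_le_div_iff₀ hD (by have := hσv (Fin.last L); positivity)]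
      have h3 := hσv (Fin.last L)
      rw [div_mul_eq_mul_div, div_le_iff₀ hbL] at hDge
      nlinarith
    have h4 := hσv l; have h5 := hσv (Fin.last L)
    calc κ * σv l ≤ (σh (Fin.last L)) ^ 2 / σv (Fin.last L) * σv l := by
          apply mul_le_mul_of_nonneg_right hκle (le_of_lt h4)
      _ ≤ (σh l) ^ 2 := by
          rw [div_mul_eq_mul_div, div_le_iff₀ h5]
          nlinarith
  have hnn : ∀ l, 0 ≤ ψstar l := by
    intro l
    rw [hψ' l]
    have h4 := hσv l
    have hbl : 0 < (σh l) ^ 2 := by have := hσh l; positivity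
    rw [sub_nonneg, div_le_div_iff₀ hbl hκpos]
    nlinarith [hκa l]
  refine ⟨hsum, hnn, ?_⟩
  intro ψ hψnn hψle hne
  obtain ⟨l0, hl0⟩ : ∃ l, ψ l ≠ ψstar l := by
    by_contra h
    push_neg at h
    exact hne (funext h)
  -- optimal objective terms equal 2 a κ
  have hterm : ∀ l, 2 * (σh l) ^ 2 * (σv l) ^ 2 / ((σv l) ^ 2 + ψstar l * (σh l) ^ 2)
      = 2 * σv l * κ := by
    intro l
    rw [hψ' l]
    have h1 := hσh l; have h2 := hσv l
    have hden : (σv l) ^ 2 + (σv l / κ - (σv l) ^ 2 / (σh l) ^ 2) * (σh l) ^ 2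
        = σv l * (σh l) ^ 2 / κ := by field_simp; ring
    rw [hden]
    field_simp
  have hkey := fun l => key_tangent (σv l) ((σh l) ^ 2) κ (ψ l) (hσv l)
    (by have := hσh l; positivity) hκpos (hψnn l)
  have hmid : (∑ l, (2 * σv l * κ - 2 * κ ^ 2 * (ψ l - ψstar l))) <
      ∑ l, 2 * (σh l) ^ 2 * (σv l) ^ 2 / ((σv l) ^ 2 + ψ l * (σh l) ^ 2) := by
    apply Finset.sum_lt_sum
    · intro l _
      have := (hkey l).1
      rw [hψ' l] at *
      linarith [this]
    · refine ⟨l0, Finset.mem_univ _, ?_⟩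
      have := (hkey l0).2 (by rw [← hψ' l0]; exact hl0)
      rw [hψ' l0]
      linarith [this]
  have hleft : (∑ l, 2 * (σh l) ^ 2 * (σv l) ^ 2 / ((σv l) ^ 2 + ψstar l * (σh l) ^ 2))
      ≤ ∑ l, (2 * σv l * κ - 2 * κ ^ 2 * (ψ l - ψstar l)) := by
    rw [Finset.sum_congr rfl (fun l _ => hterm l)]
    have : ∑ l, (2 * σv l * κ - 2 * κ ^ 2 * (ψ l - ψstar l))
        = (∑ l, 2 * σv l * κ) - 2 * κ ^ 2 * ((∑ l, ψ l) - ∑ l, ψstar l) := by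
      rw [Finset.sum_sub_distrib, ← Finset.mul_sum, Finset.sum_sub_distrib]
    rw [this, hsum]
    nlinarith [hψle, sq_nonneg κ]
  linarith
end
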